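/- arXiv:math/0404116 — 5 statements merged into one kernel-verified Lean document; each statement's English description precedes it below -/
import Mathlib

section
/- There is an absolute constant C > 0 such that for all real x ≥ 2, ∑_{n ≤ x} #Ψ*(n) ≤ C x log x, where the sum is over positive integers n ≤ x. -/
/-!
Every `m ∈ Ψ*(n)` satisfies `m ≤ 4 φ(m)² ≤ 4 n²` (from `m = ∑_{d ∣ m} φ(d) ≤ τ(m) φ(m)` and
`τ(m) ≤ 2 √m`), so counting the pairs `(n, m)` by `m` instead of by `n` gives
`∑_{n ≤ N} #Ψ*(n) ≤ ∑_{m ≤ 4N²} N / φ(m)`. Super-multiplicativity `φ(d) φ(m/d) ≤ φ(m)` turns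
`m = ∑_{d ∣ m} φ(m/d)` into `m / φ(m) ≤ ∑_{d ∣ m} 1 / φ(d)`; hence `1 / (mᵏ φ(m))` is bounded
by a Dirichlet convolution, and `∑_{m ≤ M} 1 / (mᵏ φ(m))` by
`∑_{d ≤ M} 1 / (dᵏ⁺¹ φ(d)) · ∑_{e ≤ M} 1 / eᵏ⁺¹`. With `k = 1` and `∑ 1/e² ≤ 2` this bounds
`∑ 1 / (m φ(m))` by `4`; with `k = 0` and the harmonic sum it gives
`∑_{m ≤ M} 1 / φ(m) ≤ 4 (1 + log M)`.
-/

open Finset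
open scoped Nat

namespace Nat

theorem card_divisors_sq_le (m : ℕ) : #m.divisors ^ 2 ≤ 4 * m := by
  set r := m.sqrt
  set small := {d ∈ m.divisors | d ≤ r}
  have hsmall : #small ≤ r := by
    simpa using card_le_card (s := small) (t := Icc 1 r) fun d hd => by
      simp only [small, mem_filter, mem_divisors] at hd
      exact mem_Icc.2 ⟨pos_of_dvd_of_pos hd.1.1 (pos_of_ne_zero hd.1.2), hd.2⟩
  -- A divisor above `√m` is paired with the cofactor `m / d`, which lies below it.
  have hcover : m.divisors ⊆ small ∪ small.image (m / ·) := by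
    intro d hd
    have hdm := Nat.div_mul_cancel (dvd_of_mem_divisors hd)
    by_cases hdr : d ≤ r
    · exact mem_union_left _ (mem_filter.2 ⟨hd, hdr⟩)
    refine mem_union_right _ (mem_image.2 ⟨m / d, mem_filter.2 ⟨?_, ?_⟩, ?_⟩)
    · exact mem_divisors.2 ⟨div_dvd_of_dvd (dvd_of_mem_divisors hd), (mem_divisors.1 hd).2⟩
    · have := lt_succ_sqrt m
      by_contra!
      nlinarith
    · exact Nat.div_div_self (dvd_of_mem_divisors hd) (mem_divisors.1 hd).2
  have hcard : #m.divisors ≤ 2 * r :=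
    calc #m.divisors ≤ #small + #(small.image (m / ·)) :=
          (card_le_card hcover).trans (card_union_le _ _)
      _ ≤ r + r := add_le_add hsmall (Finset.card_image_le.trans hsmall)
      _ = 2 * r := (two_mul r).symm
  nlinarith [sqrt_le' m]

theorem le_card_divisors_mul_totient (m : ℕ) : m ≤ #m.divisors * φ m := by
  conv_lhs => rw [← sum_totient m]
  simpa using sum_le_card_nsmul m.divisors φ (φ m) fun d hd =>
    le_of_dvd (totient_pos.2 (pos_of_ne_zero (ne_zero_of_mem_divisors hd)))
      (totient_dvd_of_dvd (dvd_of_mem_divisors hd))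

theorem le_four_mul_totient_sq (m : ℕ) : m ≤ 4 * φ m ^ 2 := by
  rcases m.eq_zero_or_pos with rfl | hm
  · simp
  have h := le_card_divisors_mul_totient m
  refine le_of_mul_le_mul_right ?_ hm
  calc m * m ≤ (#m.divisors * φ m) ^ 2 := by rw [sq]; exact Nat.mul_le_mul h h
    _ = #m.divisors ^ 2 * φ m ^ 2 := mul_pow _ _ _
    _ ≤ 4 * m * φ m ^ 2 := Nat.mul_le_mul_right _ (card_divisors_sq_le m)
    _ = 4 * φ m ^ 2 * m := by ring

theorem cast_le_totient_mul_sum_inv_totient (m : ℕ) :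
    (m : ℝ) ≤ φ m * ∑ d ∈ m.divisors, (φ d : ℝ)⁻¹ := by
  rw [mul_sum]
  calc (m : ℝ) = ∑ d ∈ m.divisors, (φ (m / d) : ℝ) := by
        rw [← cast_sum, sum_div_divisors m φ, sum_totient]
    _ ≤ ∑ d ∈ m.divisors, (φ m : ℝ) * (φ d : ℝ)⁻¹ := sum_le_sum fun d hd => by
        have hφd : (0 : ℝ) < φ d := by exact_mod_cast totient_pos.2 (pos_of_mem_divisors hd)
        rw [← div_eq_mul_inv, le_div_iff₀ hφd]
        have := totient_super_multiplicative (m / d) d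
        rw [Nat.div_mul_cancel (dvd_of_mem_divisors hd)] at this
        exact_mod_cast this

end Nat

theorem sum_Ioc_sum_divisorsAntidiagonal_le {R : Type*} [CommSemiring R] [PartialOrder R]
    [IsOrderedRing R] (f g : ℕ → R) (hf : ∀ n, 0 ≤ f n) (hg : ∀ n, 0 ≤ g n) (N : ℕ) :
    ∑ n ∈ Ioc 0 N, ∑ x ∈ n.divisorsAntidiagonal, f x.1 * g x.2
      ≤ (∑ n ∈ Ioc 0 N, f n) * ∑ n ∈ Ioc 0 N, g n := by
  rw [sum_mul_sum, ← sum_product']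
  calc ∑ n ∈ Ioc 0 N, ∑ x ∈ n.divisorsAntidiagonal, f x.1 * g x.2
      = ∑ n ∈ Ioc 0 N, ∑ x ∈ Ioc 0 N ×ˢ Ioc 0 N with x.1 * x.2 = n, f x.1 * g x.2 :=
        sum_congr rfl fun n hn => by
          rw [Nat.divisorsAntidiagonal_eq_prod_filter_of_le (mem_Ioc.1 hn).1.ne' (mem_Ioc.1 hn).2]
    _ ≤ _ := sum_fiberwise_le_sum_of_sum_fiber_nonneg fun _ _ =>
        sum_nonneg fun x _ => mul_nonneg (hf x.1) (hg x.2)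

theorem inv_pow_mul_totient_le (k m : ℕ) :
    ((m : ℝ) ^ k * φ m)⁻¹ ≤
      ∑ x ∈ m.divisorsAntidiagonal, ((x.1 : ℝ) ^ (k + 1) * φ x.1)⁻¹ * ((x.2 : ℝ) ^ (k + 1))⁻¹ := by
  rcases m.eq_zero_or_pos with rfl | hm
  · simp
  have hφ : (0 : ℝ) < φ m := by exact_mod_cast Nat.totient_pos.2 hm
  have hsum :
      ∑ x ∈ m.divisorsAntidiagonal, ((x.1 : ℝ) ^ (k + 1) * φ x.1)⁻¹ * ((x.2 : ℝ) ^ (k + 1))⁻¹ =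
        ((m : ℝ) ^ (k + 1))⁻¹ * ∑ d ∈ m.divisors, (φ d : ℝ)⁻¹ := by
    rw [mul_sum, ← Nat.sum_divisorsAntidiagonal (fun d _ => ((m : ℝ) ^ (k + 1))⁻¹ * (φ d : ℝ)⁻¹)]
    refine sum_congr rfl fun x hx => ?_
    rw [← (Nat.mem_divisorsAntidiagonal.1 hx).1]
    push_cast
    ring
  have hdiv : (m : ℝ) / φ m ≤ ∑ d ∈ m.divisors, (φ d : ℝ)⁻¹ := by
    rw [div_le_iff₀ hφ, mul_comm]
    exact Nat.cast_le_totient_mul_sum_inv_totient m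
  calc ((m : ℝ) ^ k * φ m)⁻¹ = ((m : ℝ) ^ (k + 1))⁻¹ * ((m : ℝ) / φ m) := by
        field_simp
        ring
    _ ≤ _ := hsum ▸ mul_le_mul_of_nonneg_left hdiv (by positivity)

theorem sum_Ioc_inv_pow_mul_totient_le (k N : ℕ) :
    ∑ m ∈ Ioc 0 N, ((m : ℝ) ^ k * φ m)⁻¹
      ≤ (∑ d ∈ Ioc 0 N, ((d : ℝ) ^ (k + 1) * φ d)⁻¹) * ∑ e ∈ Ioc 0 N, ((e : ℝ) ^ (k + 1))⁻¹ :=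
  (sum_le_sum fun m _ => inv_pow_mul_totient_le k m).trans
    (sum_Ioc_sum_divisorsAntidiagonal_le (fun d => ((d : ℝ) ^ (k + 1) * φ d)⁻¹)
      (fun e => ((e : ℝ) ^ (k + 1))⁻¹) (fun _ => by positivity) (fun _ => by positivity) N)

theorem sum_Ioc_inv_sq_le_two (N : ℕ) : ∑ n ∈ Ioc 0 N, ((n : ℝ) ^ 2)⁻¹ ≤ 2 := by
  simpa [Ioo_add_one_right_eq_Ioc] using sum_Ioo_inv_sq_le (α := ℝ) 0 (N + 1)

theorem sum_Ioc_inv_le_one_add_log (N : ℕ) : ∑ n ∈ Ioc 0 N, (n : ℝ)⁻¹ ≤ 1 + Real.log N := by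
  have h := harmonic_le_one_add_log N
  simp only [harmonic_eq_sum_Icc, Rat.cast_sum, Rat.cast_inv, Rat.cast_natCast] at h
  exact h

theorem sum_Ioc_inv_mul_totient_le_four (N : ℕ) : ∑ m ∈ Ioc 0 N, ((m : ℝ) * φ m)⁻¹ ≤ 4 := by
  have hsq : ∑ d ∈ Ioc 0 N, ((d : ℝ) ^ 2 * φ d)⁻¹ ≤ 2 :=
    (sum_le_sum fun d hd => inv_anti₀ (by have := (mem_Ioc.1 hd).1; positivity)
      (le_mul_of_one_le_right (by positivity)
        (by exact_mod_cast Nat.totient_pos.2 (mem_Ioc.1 hd).1))).trans (sum_Ioc_inv_sq_le_two N)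
  calc ∑ m ∈ Ioc 0 N, ((m : ℝ) * φ m)⁻¹ = ∑ m ∈ Ioc 0 N, ((m : ℝ) ^ 1 * φ m)⁻¹ := by simp
    _ ≤ _ := sum_Ioc_inv_pow_mul_totient_le 1 N
    _ ≤ 2 * 2 := mul_le_mul hsq (sum_Ioc_inv_sq_le_two N) (by positivity) zero_le_two
    _ = 4 := by norm_num

theorem sum_Ioc_inv_totient_le (N : ℕ) : ∑ m ∈ Ioc 0 N, (φ m : ℝ)⁻¹ ≤ 4 * (1 + Real.log N) := by
  calc ∑ m ∈ Ioc 0 N, (φ m : ℝ)⁻¹ = ∑ m ∈ Ioc 0 N, ((m : ℝ) ^ 0 * φ m)⁻¹ := by simp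
    _ ≤ _ := sum_Ioc_inv_pow_mul_totient_le 0 N
    _ ≤ 4 * (1 + Real.log N) := by
        simp only [zero_add, pow_one]
        exact mul_le_mul (sum_Ioc_inv_mul_totient_le_four N) (sum_Ioc_inv_le_one_add_log N)
          (by positivity) zero_le_four

def psiStar (n : ℕ) : Set ℕ := {m | 0 < m ∧ φ m ∣ n}

theorem psiStar_eq_filter {n B : ℕ} (hn : n ≠ 0) (hB : 4 * n ^ 2 ≤ B) :
    psiStar n = ↑{m ∈ Ioc 0 B | φ m ∣ n} := by
  ext m
  simp only [psiStar, Set.mem_ofPred_eq, coe_filter, mem_Ioc]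
  refine ⟨fun ⟨hm, hdvd⟩ => ⟨⟨hm, ?_⟩, hdvd⟩, fun ⟨⟨hm, _⟩, hdvd⟩ => ⟨hm, hdvd⟩⟩
  have := Nat.le_of_dvd (Nat.pos_of_ne_zero hn) hdvd
  calc m ≤ 4 * φ m ^ 2 := Nat.le_four_mul_totient_sq m
    _ ≤ 4 * n ^ 2 := by gcongr
    _ ≤ B := hB

theorem sum_card_filter_totient_dvd (N B : ℕ) :
    ∑ n ∈ Ioc 0 N, #{m ∈ Ioc 0 B | φ m ∣ n} = ∑ m ∈ Ioc 0 B, N / φ m := by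
  simp only [card_filter, ← Nat.Ioc_filter_dvd_card_eq_div]
  exact sum_comm

theorem sum_Ioc_ncard_psiStar_le (N : ℕ) :
    ∑ n ∈ Ioc 0 N, ((psiStar n).ncard : ℝ) ≤ 4 * N * (1 + Real.log (4 * N ^ 2)) := by
  have hncard : ∀ n ∈ Ioc 0 N,
      ((psiStar n).ncard : ℝ) = (#{m ∈ Ioc 0 (4 * N ^ 2) | φ m ∣ n} : ℕ) := fun n hn => by
    rw [psiStar_eq_filter (B := 4 * N ^ 2) (mem_Ioc.1 hn).1.ne' (by gcongr; exact (mem_Ioc.1 hn).2),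
      Set.ncard_coe_finset]
  calc ∑ n ∈ Ioc 0 N, ((psiStar n).ncard : ℝ)
      = ∑ m ∈ Ioc 0 (4 * N ^ 2), ((N / φ m : ℕ) : ℝ) := by
        rw [sum_congr rfl hncard, ← Nat.cast_sum, ← Nat.cast_sum, sum_card_filter_totient_dvd]
    _ ≤ ∑ m ∈ Ioc 0 (4 * N ^ 2), (N : ℝ) * (φ m : ℝ)⁻¹ :=
        sum_le_sum fun m _ => Nat.cast_div_le.trans_eq (div_eq_mul_inv _ _)
    _ ≤ N * (4 * (1 + Real.log (4 * N ^ 2 : ℕ))) := by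
        rw [← mul_sum]
        gcongr
        exact sum_Ioc_inv_totient_le _
    _ = 4 * N * (1 + Real.log (4 * N ^ 2)) := by push_cast; ring

/-- There is an absolute constant `C > 0` such that for all real `x ≥ 2`,
`∑_{n ≤ x} #Ψ*(n) ≤ C x log x`, where `Ψ*(n) = {m ≥ 1 : φ(m) ∣ n}`. -/
theorem sum_card_psiStar_le :
    ∃ C : ℝ, 0 < C ∧ ∀ x : ℝ, 2 ≤ x →
      ∑ n ∈ Finset.Icc 1 ⌊x⌋₊, ({m : ℕ | 0 < m ∧ m.totient ∣ n}.ncard : ℝ)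
        ≤ C * x * Real.log x := by
  -- `4 N² ≤ x⁴` and `1 ≤ 2 log x` for `N = ⌊x⌋ ≥ 2`, so `4 N (1 + log (4 N²)) ≤ 4 x · 6 log x`.
  refine ⟨24, by norm_num, fun x hx => ?_⟩
  set N := ⌊x⌋₊
  have hN : 1 ≤ (N : ℝ) := by exact_mod_cast Nat.le_floor (by push_cast; linarith)
  have hNx : (N : ℝ) ≤ x := Nat.floor_le (by linarith)
  have hlog_half : 1 / 2 < Real.log x :=
    (Real.log_two_gt_d9.trans_le' (by norm_num)).trans_le (Real.log_le_log two_pos hx)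
  have hlogB : Real.log (4 * N ^ 2) ≤ 4 * Real.log x :=
    calc Real.log (4 * N ^ 2) ≤ Real.log (x ^ 4) := Real.log_le_log (by positivity) (by
        nlinarith [pow_le_pow_left₀ (by positivity) hNx 2, pow_le_pow_left₀ zero_le_two hx 2])
      _ = 4 * Real.log x := by simp [Real.log_pow]
  have hlogB₀ : 0 ≤ Real.log (4 * N ^ 2) := Real.log_nonneg (by nlinarith)
  calc ∑ n ∈ Icc 1 N, ((psiStar n).ncard : ℝ) ≤ 4 * N * (1 + Real.log (4 * N ^ 2)) :=
        sum_Ioc_ncard_psiStar_le N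
    _ ≤ 4 * x * (6 * Real.log x) := by gcongr; linarith
    _ = 24 * x * Real.log x := by ring
end

section
/- There is an absolute constant C > 0 such that for all real x ≥ 1, the number of positive integers m with φ(m) ≤ x is at most C x; equivalently, ∑_{d ≤ x} #Ψ(d) ≤ C x. -/
/-!
Write `r(m) = m / φ(m) = ∏_{p ∣ m} p / (p - 1)`. Expanding `r(m)² = ∏_{p ∣ m} (1 + g(p))` over
sets of prime factors and counting multiples of their products gives
`∑_{m ≤ B} r(m)² ≤ B ∏_{p ≤ B} (1 + g(p) / p) ≤ K B` with `K = exp 16`, since `g(p) / p ≤ 8 / p²`.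
If `N < m ≤ 2N` and `φ(m) ≤ T` then `r(m) ≥ N / T`, so by Chebyshev's inequality there are at
most `2 K T² / N` such `m`; summing over the dyadic blocks `N = 2ʲ T` leaves at most `4 K T`
integers `m > T` with `φ(m) ≤ T`. The single term `r(m)² ≤ K m` gives `m ≤ K φ(m)²`, so all
these sets are finite.
-/

open Finset Real
open scoped Nat

noncomputable def totientRatio (m : ℕ) : ℝ := m / φ m

noncomputable def primeWeight (p : ℕ) : ℝ := ((p : ℝ) / (p - 1)) ^ 2 - 1

theorem totientRatio_mul_totient {m : ℕ} (hm : m ≠ 0) : totientRatio m * φ m = m :=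
  div_mul_cancel₀ _ (by exact_mod_cast (Nat.totient_pos.mpr (Nat.pos_of_ne_zero hm)).ne')

theorem totientRatio_eq_prod {m : ℕ} (hm : m ≠ 0) :
    totientRatio m = ∏ p ∈ m.primeFactors, (p : ℝ) / (p - 1) := by
  have h := congrArg (Rat.cast : ℚ → ℝ) (Nat.totient_eq_mul_prod_factors m)
  push_cast at h
  have hm' : (m : ℝ) ≠ 0 := by exact_mod_cast hm
  rw [totientRatio, h, div_mul_cancel_left₀ hm', ← prod_inv_distrib]
  refine prod_congr rfl fun p hp => ?_
  have hp : (p : ℝ) ≠ 0 := by exact_mod_cast (Nat.pos_of_mem_primeFactors hp).ne'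
  field_simp

theorem totientRatio_sq_eq_sum_powerset {m : ℕ} (hm : m ≠ 0) :
    totientRatio m ^ 2 = ∑ S ∈ m.primeFactors.powerset, ∏ p ∈ S, primeWeight p := by
  simp only [totientRatio_eq_prod hm, ← prod_pow, primeWeight, ← prod_add_one, sub_add_cancel]

theorem primeWeight_nonneg {p : ℕ} (hp : 1 < p) : 0 ≤ primeWeight p := by
  have hp : (1 : ℝ) < p := by exact_mod_cast hp
  rw [primeWeight, sub_nonneg]
  exact one_le_pow₀ ((one_le_div (by linarith)).mpr (by linarith))

theorem primeWeight_div_le {p : ℕ} (hp : 2 ≤ p) : primeWeight p / p ≤ 8 / p ^ 2 := by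
  have hp : (2 : ℝ) ≤ p := by exact_mod_cast hp
  have hp1 : (p : ℝ) - 1 ≠ 0 := by linarith
  rw [primeWeight, div_pow, div_sub_one (pow_ne_zero 2 hp1), div_div,
    div_le_div_iff₀ (by positivity) (by positivity)]
  nlinarith

theorem sum_primesBelow_inv_sq_le (n : ℕ) : ∑ p ∈ n.primesBelow, ((p : ℝ) ^ 2)⁻¹ ≤ 2 := by
  calc ∑ p ∈ n.primesBelow, ((p : ℝ) ^ 2)⁻¹ ≤ ∑ i ∈ Ioo 0 n, ((i : ℝ) ^ 2)⁻¹ := by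
        refine sum_le_sum_of_subset_of_nonneg (fun p hp => ?_) fun _ _ _ => by positivity
        obtain ⟨hpn, hp⟩ := Nat.mem_primesBelow.mp hp
        exact mem_Ioo.mpr ⟨hp.pos, hpn⟩
    _ ≤ 2 := by simpa using sum_Ioo_inv_sq_le (α := ℝ) 0 n

theorem card_filter_subset_primeFactors_le {S : Finset ℕ} (hS : ∀ p ∈ S, p.Prime) (B : ℕ) :
    #{m ∈ Ioc 0 B | S ⊆ m.primeFactors} ≤ B / ∏ p ∈ S, p := by
  rw [← Nat.Ioc_filter_dvd_card_eq_div]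
  refine card_le_card (monotone_filter_right _ fun m _ hm => ?_)
  exact prod_primes_dvd m (fun p hp => (hS p hp).prime) fun p hp => Nat.dvd_of_mem_primeFactors (hm hp)

theorem sum_Ioc_sum_powerset_primeFactors_le {f : ℕ → ℝ} (hf : ∀ p, p.Prime → 0 ≤ f p)
    (B : ℕ) :
    ∑ m ∈ Ioc 0 B, ∑ S ∈ m.primeFactors.powerset, ∏ p ∈ S, f p ≤
      B * ∏ p ∈ (B + 1).primesBelow, (1 + f p / p) := by
  set P := (B + 1).primesBelow
  have hswap : ∑ m ∈ Ioc 0 B, ∑ S ∈ m.primeFactors.powerset, ∏ p ∈ S, f p =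
      ∑ S ∈ P.powerset, ∑ m ∈ Ioc 0 B with S ⊆ m.primeFactors, ∏ p ∈ S, f p := by
    refine sum_comm' fun m S => ?_
    simp only [mem_Ioc, mem_powerset, mem_filter, P]
    refine ⟨fun ⟨hm, hS⟩ => ⟨⟨hm, hS⟩, hS.trans fun p hp => ?_⟩, fun ⟨h, _⟩ => h⟩
    exact Nat.mem_primesBelow.mpr ⟨Nat.lt_succ_of_le ((Nat.le_of_mem_primeFactors hp).trans hm.2),
      Nat.prime_of_mem_primeFactors hp⟩
  rw [hswap, prod_one_add, mul_sum]
  refine sum_le_sum fun S hS => ?_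
  have hSP : ∀ p ∈ S, p.Prime := fun p hp => (Nat.mem_primesBelow.mp (mem_powerset.mp hS hp)).2
  have hcard : (#{m ∈ Ioc 0 B | S ⊆ m.primeFactors} : ℝ) ≤ B / ∏ p ∈ S, (p : ℝ) := by
    rw [← Nat.cast_prod]
    exact (Nat.cast_le.mpr (card_filter_subset_primeFactors_le hSP B)).trans Nat.cast_div_le
  calc ∑ m ∈ Ioc 0 B with S ⊆ m.primeFactors, ∏ p ∈ S, f p
      = #{m ∈ Ioc 0 B | S ⊆ m.primeFactors} * ∏ p ∈ S, f p := by rw [sum_const, nsmul_eq_mul]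
    _ ≤ B / (∏ p ∈ S, (p : ℝ)) * ∏ p ∈ S, f p := by
        gcongr
        exact prod_nonneg fun p hp => hf p (hSP p hp)
    _ = B * ∏ p ∈ S, f p / p := by rw [prod_div_distrib]; ring

theorem prod_primesBelow_one_add_primeWeight_div_le (n : ℕ) :
    ∏ p ∈ n.primesBelow, (1 + primeWeight p / p) ≤ exp 16 := by
  calc ∏ p ∈ n.primesBelow, (1 + primeWeight p / p)
      ≤ ∏ p ∈ n.primesBelow, (1 + 8 * ((p : ℝ) ^ 2)⁻¹) := by
        refine prod_le_prod (fun p hp => ?_) fun p hp => ?_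
        all_goals have hp := (Nat.mem_primesBelow.mp hp).2
        · have := primeWeight_nonneg hp.one_lt
          positivity
        · rw [← div_eq_mul_inv]
          exact add_le_add_right (primeWeight_div_le hp.two_le) 1
    _ ≤ exp (∑ p ∈ n.primesBelow, 8 * ((p : ℝ) ^ 2)⁻¹) :=
        prod_one_add_le_exp_sum _ fun p => by positivity
    _ ≤ exp 16 := by
        rw [← mul_sum]
        gcongr
        linarith [sum_primesBelow_inv_sq_le n]

theorem sum_totientRatio_sq_le (B : ℕ) : ∑ m ∈ Ioc 0 B, totientRatio m ^ 2 ≤ exp 16 * B := by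
  calc ∑ m ∈ Ioc 0 B, totientRatio m ^ 2
      = ∑ m ∈ Ioc 0 B, ∑ S ∈ m.primeFactors.powerset, ∏ p ∈ S, primeWeight p :=
        sum_congr rfl fun m hm => totientRatio_sq_eq_sum_powerset (mem_Ioc.mp hm).1.ne'
    _ ≤ B * ∏ p ∈ (B + 1).primesBelow, (1 + primeWeight p / p) :=
        sum_Ioc_sum_powerset_primeFactors_le (fun p hp => primeWeight_nonneg hp.one_lt) B
    _ ≤ exp 16 * B := by
        rw [mul_comm]
        gcongr
        exact prod_primesBelow_one_add_primeWeight_div_le _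

theorem le_exp_mul_totient_sq (m : ℕ) : (m : ℝ) ≤ exp 16 * φ m ^ 2 := by
  rcases Nat.eq_zero_or_pos m with rfl | hm
  · simp
  have hr : totientRatio m ^ 2 ≤ exp 16 * m :=
    (single_le_sum (fun k _ => sq_nonneg (totientRatio k)) (mem_Ioc.mpr ⟨hm, le_rfl⟩)).trans
      (sum_totientRatio_sq_le m)
  have hφ : (0 : ℝ) < φ m := by exact_mod_cast Nat.totient_pos.mpr hm
  have hm' : (0 : ℝ) < m := by exact_mod_cast hm
  rw [totientRatio, div_pow, div_le_iff₀ (by positivity)] at hr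
  nlinarith

theorem le_floor_of_totient_le {m T : ℕ} (h : φ m ≤ T) : m ≤ ⌊exp 16 * T ^ 2⌋₊ := by
  refine Nat.le_floor ((le_exp_mul_totient_sq m).trans ?_)
  gcongr

theorem card_filter_totient_le_Ioc_mul_sq_le (T N : ℕ) :
    (#{m ∈ Ioc N (2 * N) | φ m ≤ T} : ℝ) * N ^ 2 ≤ 2 * exp 16 * T ^ 2 * N := by
  set F := {m ∈ Ioc N (2 * N) | φ m ≤ T}
  have hF : ∀ m ∈ F, (N : ℝ) ^ 2 ≤ T ^ 2 * totientRatio m ^ 2 := by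
    intro m hm
    obtain ⟨hmI, hmT⟩ := mem_filter.mp hm
    have hNm := (mem_Ioc.mp hmI).1
    rw [← mul_pow]
    gcongr
    calc (N : ℝ) ≤ m := by exact_mod_cast hNm.le
      _ = totientRatio m * φ m := (totientRatio_mul_totient (by omega)).symm
      _ ≤ totientRatio m * T := by
          gcongr
          exact div_nonneg (Nat.cast_nonneg _) (Nat.cast_nonneg _)
      _ = T * totientRatio m := mul_comm _ _
  have hFsub : F ⊆ Ioc 0 (2 * N) := fun m hm => by
    have := mem_Ioc.mp (mem_filter.mp hm).1
    exact mem_Ioc.mpr ⟨by omega, this.2⟩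
  calc (#F : ℝ) * N ^ 2 = ∑ m ∈ F, (N : ℝ) ^ 2 := by rw [sum_const, nsmul_eq_mul]
    _ ≤ ∑ m ∈ F, T ^ 2 * totientRatio m ^ 2 := sum_le_sum hF
    _ ≤ T ^ 2 * ∑ m ∈ Ioc 0 (2 * N), totientRatio m ^ 2 := by
        rw [← mul_sum]
        gcongr
    _ ≤ T ^ 2 * (exp 16 * (2 * N : ℕ)) := by gcongr; exact sum_totientRatio_sq_le _
    _ = 2 * exp 16 * T ^ 2 * N := by push_cast; ring

theorem card_filter_totient_le_Ioc_two_pow_le {T : ℕ} (hT : 0 < T) (J : ℕ) :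
    (#{m ∈ Ioc T (2 ^ J * T) | φ m ≤ T} : ℝ) ≤ 4 * exp 16 * T := by
  have hsplit : ∀ J, #{m ∈ Ioc T (2 ^ J * T) | φ m ≤ T} ≤
      ∑ j ∈ range J, #{m ∈ Ioc (2 ^ j * T) (2 * (2 ^ j * T)) | φ m ≤ T} := by
    intro J
    induction J with
    | zero => simp
    | succ J ih =>
      have hle : T ≤ 2 ^ J * T := Nat.le_mul_of_pos_left T (Nat.two_pow_pos J)
      rw [sum_range_succ, pow_succ', mul_assoc, ← Ioc_union_Ioc_eq_Ioc hle (by omega),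
        filter_union]
      exact (card_union_le _ _).trans (by gcongr)
  have hblock : ∀ j, (#{m ∈ Ioc (2 ^ j * T) (2 * (2 ^ j * T)) | φ m ≤ T} : ℝ) ≤
      2 * exp 16 * T * (1 / 2) ^ j := by
    intro j
    have h := card_filter_totient_le_Ioc_mul_sq_le T (2 ^ j * T)
    push_cast at h
    rw [one_div_pow, ← div_eq_mul_one_div, le_div_iff₀ (by positivity)]
    refine le_of_mul_le_mul_right ?_ (by positivity : (0 : ℝ) < 2 ^ j * T ^ 2)
    linear_combination h
  calc (#{m ∈ Ioc T (2 ^ J * T) | φ m ≤ T} : ℝ)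
      ≤ ∑ j ∈ range J, (#{m ∈ Ioc (2 ^ j * T) (2 * (2 ^ j * T)) | φ m ≤ T} : ℝ) := by
        exact_mod_cast hsplit J
    _ ≤ ∑ j ∈ range J, 2 * exp 16 * T * (1 / 2) ^ j := sum_le_sum fun j _ => hblock j
    _ ≤ 2 * exp 16 * T * 2 := by
        rw [← mul_sum]
        gcongr
        exact sum_geometric_two_le J
    _ = 4 * exp 16 * T := by ring

theorem card_filter_totient_le_Ioc_zero_le {T : ℕ} (hT : 0 < T) (B : ℕ) :
    (#{m ∈ Ioc 0 B | φ m ≤ T} : ℝ) ≤ (1 + 4 * exp 16) * T := by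
  have hB : B ≤ 2 ^ B * T := Nat.lt_two_pow_self.le.trans (Nat.le_mul_of_pos_right _ hT)
  have hsub : {m ∈ Ioc 0 B | φ m ≤ T} ⊆ Ioc 0 T ∪ {m ∈ Ioc T (2 ^ B * T) | φ m ≤ T} := by
    intro m hm
    simp only [mem_filter, mem_Ioc, mem_union] at hm ⊢
    omega
  calc (#{m ∈ Ioc 0 B | φ m ≤ T} : ℝ) ≤ #(Ioc 0 T) + #{m ∈ Ioc T (2 ^ B * T) | φ m ≤ T} := by
        exact_mod_cast (card_le_card hsub).trans (card_union_le _ _)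
    _ ≤ T + 4 * exp 16 * T := by
        rw [Nat.card_Ioc, Nat.sub_zero]
        gcongr
        exact card_filter_totient_le_Ioc_two_pow_le hT B
    _ = (1 + 4 * exp 16) * T := by ring

theorem setOf_totient_le_eq (T : ℕ) :
    {m | 0 < m ∧ φ m ≤ T} = ↑{m ∈ Ioc 0 ⌊exp 16 * T ^ 2⌋₊ | φ m ≤ T} := by
  ext m
  simp only [Set.mem_ofPred_eq, coe_filter, mem_Ioc]
  exact ⟨fun ⟨hm, h⟩ => ⟨⟨hm, le_floor_of_totient_le h⟩, h⟩, fun ⟨⟨hm, _⟩, h⟩ => ⟨hm, h⟩⟩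

theorem ncard_setOf_totient_le_le {T : ℕ} (hT : 0 < T) :
    ({m | 0 < m ∧ φ m ≤ T}.ncard : ℝ) ≤ (1 + 4 * exp 16) * T := by
  rw [setOf_totient_le_eq, Set.ncard_coe_finset]
  exact card_filter_totient_le_Ioc_zero_le hT _

theorem sum_ncard_setOf_totient_eq (T : ℕ) :
    ∑ d ∈ Icc 1 T, {m | 0 < m ∧ φ m = d}.ncard = {m | 0 < m ∧ φ m ≤ T}.ncard := by
  set F := {m ∈ Ioc 0 ⌊exp 16 * T ^ 2⌋₊ | φ m ≤ T}
  have hfiber : ∀ d ∈ Icc 1 T, {m | 0 < m ∧ φ m = d} = ↑{m ∈ F | φ m = d} := by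
    intro d hd
    have hdT := (mem_Icc.mp hd).2
    ext m
    simp only [Set.mem_ofPred_eq, coe_filter, mem_filter, mem_Ioc, F]
    constructor
    · rintro ⟨hm, rfl⟩
      exact ⟨⟨⟨hm, le_floor_of_totient_le hdT⟩, hdT⟩, rfl⟩
    · rintro ⟨⟨⟨hm, _⟩, _⟩, h⟩
      exact ⟨hm, h⟩
  rw [setOf_totient_le_eq, Set.ncard_coe_finset, card_eq_sum_card_fiberwise (f := φ) (t := Icc 1 T)]
  · exact sum_congr rfl fun d hd => by rw [hfiber d hd, Set.ncard_coe_finset]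
  · intro m hm
    obtain ⟨hmI, hmT⟩ := mem_filter.mp hm
    exact mem_Icc.mpr ⟨Nat.totient_pos.mpr (mem_Ioc.mp hmI).1, hmT⟩

/-- There is an absolute constant `C > 0` such that for all real `x ≥ 1`, the number of
positive integers `m` with `φ(m) ≤ x` is at most `C x`; equivalently,
`∑_{d ≤ x} #Ψ(d) ≤ C x`, where `Ψ(d) = {m ≥ 1 : φ(m) = d}`. -/
theorem card_totient_le_x :
    ∃ C : ℝ, 0 < C ∧ ∀ x : ℝ, 1 ≤ x →
      ({m : ℕ | 0 < m ∧ (m.totient : ℝ) ≤ x}.ncard : ℝ) ≤ C * x ∧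
      ∑ d ∈ Finset.Icc 1 ⌊x⌋₊, ({m : ℕ | 0 < m ∧ m.totient = d}.ncard : ℝ) ≤ C * x := by
  refine ⟨1 + 4 * exp 16, by positivity, fun x hx => ?_⟩
  have hx0 : 0 ≤ x := by linarith
  have hset : {m : ℕ | 0 < m ∧ (m.totient : ℝ) ≤ x} = {m | 0 < m ∧ φ m ≤ ⌊x⌋₊} := by
    ext m
    simp only [Set.mem_ofPred_eq, Nat.le_floor_iff hx0]
  have hbound : ({m | 0 < m ∧ φ m ≤ ⌊x⌋₊}.ncard : ℝ) ≤ (1 + 4 * exp 16) * x :=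
    (ncard_setOf_totient_le_le (Nat.floor_pos.mpr hx)).trans (by gcongr; exact Nat.floor_le hx0)
  refine ⟨hset ▸ hbound, ?_⟩
  rwa [← Nat.cast_sum, sum_ncard_setOf_totient_eq]
end

section
/- Let k ≥ 1 be an odd integer and let x₁,…,x_{2k} be integers whose sum S = x₁ + ⋯ + x_{2k} is even. Then there exist a positive integer M ≥ 2 and integers a₁,…,a_{2k} with gcd(aᵢ, M) = 1 for every i, such that for all positive integers N₁,…,N_{2k} satisfying Nᵢ ≡ aᵢ (mod M) the following three conditions hold: (i) for every nonempty subset I ⊆ {1,…,2k} with #I ≤ k, gcd(2·∏_{i∈I} Nᵢ + 1, M) = 1 if and only if #I = k and ∑_{i∈I} xᵢ = S/2; (ii) for every i = 1,…,2k, Nᵢ − 1 does not divide 4·N₁⋯N_{2k}; (iii) gcd(2·N₁⋯N_{2k} + 1, M) > 1 and gcd(4·N₁⋯N_{2k} + 1, M) > 1. -/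
/-!
Take `M = 5 · ∏_{I ∈ T} p_I`, where `T` is the family of nonempty index sets that are not
balanced (`#I = k` and `∑_{i ∈ I} xᵢ = S/2`); it contains the full index set. Modulo 5 all
`Nᵢ ≡ 1`, so `5 ∣ Nᵢ - 1` but `5 ∤ 4 ∏ Nⱼ`, while `5 ∣ 4 ∏ Nⱼ + 1`.

For `I ∈ T` the prime `p_I ≡ 5 (mod 8)` (Dirichlet) makes `-1/2` a non-square, and the residues
modulo `p_I` are chosen so that `2 ∏_{i ∈ J} Nᵢ + 1 ≡ 0` exactly when `J = I`: `Nᵢ ≡ r ^ 2 ^ i`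
for a square `r` of order at least `2 ^ 2k`, except at one `i₀ ∈ I`, where `Nᵢ₀` is fixed by
`∏_{i ∈ I} Nᵢ ≡ -1/2`. Products over `J ∌ i₀` are then squares, and for `J ∋ i₀` the product is
`-1/2` exactly when the binary numbers `∑_{i ∈ J \ i₀} 2 ^ i` and `∑_{i ∈ I \ i₀} 2 ^ i` agree.
The Chinese remainder theorem glues the residues together.
-/

open Finset

theorem Fin.sum_two_pow_eq_sum_map {K : ℕ} (J : Finset (Fin K)) :
    ∑ i ∈ J, 2 ^ (i : ℕ) = ∑ i ∈ J.map Fin.valEmbedding, 2 ^ i :=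
  (sum_map J Fin.valEmbedding (2 ^ ·)).symm

theorem Fin.sum_two_pow_lt {K : ℕ} (J : Finset (Fin K)) : ∑ i ∈ J, 2 ^ (i : ℕ) < 2 ^ K := by
  rw [Fin.sum_two_pow_eq_sum_map]
  exact Nat.geomSum_lt le_rfl (by simp)

theorem Fin.sum_two_pow_injective {K : ℕ} :
    Function.Injective fun J : Finset (Fin K) ↦ ∑ i ∈ J, 2 ^ (i : ℕ) := by
  intro J J' h
  simp only [Fin.sum_two_pow_eq_sum_map] at h
  exact map_injective _ (geomSum_injective le_rfl h)

theorem exists_prod_eq_iff_eq {G : Type*} [CommGroup G] {K : ℕ} {r c : G}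
    (hr : 2 ^ K ≤ orderOf r) (hc : ∀ m : ℕ, r ^ m ≠ c) {I : Finset (Fin K)}
    (hI : I.Nonempty) :
    ∃ b : Fin K → G, ∀ J, ∏ i ∈ J, b i = c ↔ J = I := by
  classical
  obtain ⟨i₀, hi₀⟩ := hI
  set e : Finset (Fin K) → ℕ := fun J ↦ ∑ i ∈ J, 2 ^ (i : ℕ) with he
  have hpow_inj : ∀ J J', r ^ e J = r ^ e J' ↔ J = J' := fun J J' ↦
    ⟨fun h ↦ Fin.sum_two_pow_injective (pow_injOn_Iio_orderOf
      ((Fin.sum_two_pow_lt J).trans_le hr) ((Fin.sum_two_pow_lt J').trans_le hr) h),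
     fun h ↦ h ▸ rfl⟩
  set b : Fin K → G := fun i ↦
    if i = i₀ then c * (r ^ e (I.erase i₀))⁻¹ else r ^ 2 ^ (i : ℕ)
  have hprod : ∀ J, i₀ ∉ J → ∏ i ∈ J, b i = r ^ e J := fun J hJ ↦ by
    rw [he, ← prod_pow_eq_pow_sum]
    exact prod_congr rfl fun i hi ↦ if_neg (ne_of_mem_of_not_mem hi hJ)
  refine ⟨b, fun J ↦ ?_⟩
  by_cases hJ : i₀ ∈ J
  · rw [← mul_prod_erase J b hJ, hprod _ (notMem_erase i₀ J)]
    simp only [b, if_pos rfl]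
    rw [mul_assoc, mul_eq_left, inv_mul_eq_one, eq_comm, hpow_inj]
    exact ⟨fun h ↦ by rw [← insert_erase hJ, h, insert_erase hi₀], fun h ↦ h ▸ rfl⟩
  · rw [hprod J hJ]
    exact iff_of_false (hc _) fun h ↦ hJ (h ▸ hi₀)

theorem ZMod.exists_units_two_mul_prod_add_one_eq_zero_iff {p K : ℕ} [Fact p.Prime]
    (hp : ¬ IsSquare (-2 : ZMod p)) (hpK : 2 ^ (K + 1) < p) {I : Finset (Fin K)}
    (hI : I.Nonempty) :
    ∃ b : Fin K → (ZMod p)ˣ, ∀ J, 2 * ∏ i ∈ J, (b i : ZMod p) + 1 = 0 ↔ J = I := by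
  have h2 : (2 : ZMod p) ≠ 0 := fun h ↦ hp ⟨0, by simp [h]⟩
  have h2inv : (2 : ZMod p) * 2⁻¹ = 1 := mul_inv_cancel₀ h2
  obtain ⟨g, hg⟩ := IsCyclic.exists_generator (α := (ZMod p)ˣ)
  have hg_ord : orderOf g = p - 1 := by
    rw [orderOf_eq_card_of_forall_mem_zpowers hg, Nat.card_eq_fintype_card, ZMod.card_units]
  have h2_dvd : 2 ∣ orderOf g := by
    have := (Fact.out : p.Prime).eq_two_or_odd
    have := Nat.one_lt_two_pow (Nat.succ_ne_zero K)
    omega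
  have hr : 2 ^ K ≤ orderOf (g ^ 2) := by
    rw [orderOf_pow_of_dvd two_ne_zero h2_dvd, hg_ord]
    rw [pow_succ] at hpK
    omega
  obtain ⟨b, hb⟩ := exists_prod_eq_iff_eq hr (c := Units.mk0 (-2⁻¹) (by simp [h2]))
    (fun m hm ↦ hp ⟨2 * (g ^ m : (ZMod p)ˣ), by
      have hy := congr_arg Units.val hm
      push_cast [Units.val_mk0, ← pow_mul, mul_comm 2 m, pow_mul] at hy ⊢
      linear_combination (-4) * hy + 2 * h2inv⟩) hI
  refine ⟨b, fun J ↦ ?_⟩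
  rw [← hb J, Units.ext_iff, Units.coe_prod, Units.val_mk0]
  constructor
  · intro h
    linear_combination 2⁻¹ * h - (∏ i ∈ J, (b i : ZMod p)) * h2inv
  · intro h
    linear_combination 2 * h - h2inv

theorem Nat.exists_injective_prime_natCast_eq (α : Type*) [Countable α] {q : ℕ} [NeZero q]
    {u : ZMod q} (hu : IsUnit u) (n : ℕ) :
    ∃ P : α → ℕ, Function.Injective P ∧
      ∀ a, (P a).Prime ∧ (P a : ZMod q) = u ∧ n < P a := by
  have hs := (Nat.infinite_setOfPred_prime_and_eq_mod hu).sdiff (Set.finite_Iic n)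
  obtain ⟨f, hf⟩ := Countable.exists_injective_nat α
  refine ⟨fun a ↦ hs.natEmbedding _ (f a),
    Subtype.val_injective.comp ((hs.natEmbedding _).injective.comp hf), fun a ↦ ?_⟩
  obtain ⟨⟨hp, hpu⟩, hpn⟩ := (hs.natEmbedding _ (f a)).2
  exact ⟨hp, hpu, not_le.1 hpn⟩

theorem Int.gcd_natCast_prime_eq_one_iff {p : ℕ} (hp : p.Prime) (z : ℤ) :
    Int.gcd z p = 1 ↔ (z : ZMod p) ≠ 0 := by
  rw [Ne, ZMod.intCast_zmod_eq_zero_iff_dvd, Int.natCast_dvd, ← hp.coprime_iff_not_dvd,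
    Nat.coprime_comm]
  rfl

theorem Int.gcd_prod_primes_eq_one_iff {ι : Type*} [Fintype ι] {q : ι → ℕ}
    (hq : ∀ j, (q j).Prime) (z : ℤ) :
    Int.gcd z ↑(∏ j, q j) = 1 ↔ ∀ j, (z : ZMod (q j)) ≠ 0 := by
  simp only [← Int.gcd_natCast_prime_eq_one_iff (hq _)]
  exact Nat.coprime_prod_right_iff.trans (by simp only [mem_univ, true_implies]; rfl)

theorem Int.one_lt_gcd_prod_primes_iff {ι : Type*} [Fintype ι] {q : ι → ℕ}
    (hq : ∀ j, (q j).Prime) (z : ℤ) :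
    1 < Int.gcd z ↑(∏ j, q j) ↔ ∃ j, (z : ZMod (q j)) = 0 := by
  have : 0 < Int.gcd z ↑(∏ j, q j) :=
    Int.gcd_pos_of_ne_zero_right _ (by exact_mod_cast (prod_pos fun j _ ↦ (hq j).pos).ne')
  rw [← not_iff_not, not_exists, ← Int.gcd_prod_primes_eq_one_iff hq]
  omega

theorem exists_intCast_eq_of_pairwise_coprime {ι : Type*} [Fintype ι] {q : ι → ℕ}
    (hq : Pairwise fun i j ↦ (q i).Coprime (q j)) (ρ : ∀ j, ZMod (q j)) :
    ∃ a : ℤ, ∀ j, (a : ZMod (q j)) = ρ j := by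
  refine ⟨ZMod.cast ((ZMod.prodEquivPi q hq).symm ρ), fun j ↦ ?_⟩
  have h := ZMod.prodEquivPi_apply q hq ((ZMod.prodEquivPi q hq).symm ρ) j
  rw [RingEquiv.apply_symm_apply, ZMod.castHom_apply] at h
  rw [ZMod.intCast_cast, ← h]

section ModFive

variable {ι : Type*} [Fintype ι] {N : ι → ℤ}

theorem not_sub_one_dvd_four_mul_prod (hN : ∀ i, (N i : ZMod 5) = 1) (i : ι) :
    ¬ N i - 1 ∣ 4 * ∏ j, N j := by
  intro h
  have h5 : ((5 : ℕ) : ℤ) ∣ N i - 1 := by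
    rw [← ZMod.intCast_zmod_eq_zero_iff_dvd]
    push_cast [hN]
    exact sub_self 1
  have := (ZMod.intCast_zmod_eq_zero_iff_dvd _ 5).2 (h5.trans h)
  push_cast [hN, prod_const_one] at this
  exact absurd this (by decide)

theorem intCast_four_mul_prod_add_one_eq_zero (hN : ∀ i, (N i : ZMod 5) = 1) :
    ((4 * ∏ j, N j + 1 : ℤ) : ZMod 5) = 0 := by
  push_cast [hN, prod_const_one]
  decide

end ModFive

theorem exists_injective_primes_two_mul_prod_add_one_eq_zero_iff (K : ℕ) :
    ∃ P : Finset (Fin K) → ℕ, Function.Injective P ∧ ∀ I, (P I).Prime ∧ 5 < P I ∧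
      (I.Nonempty → ∃ b : Fin K → (ZMod (P I))ˣ,
        ∀ J, 2 * ∏ i ∈ J, (b i : ZMod (P I)) + 1 = 0 ↔ J = I) := by
  obtain ⟨P, hP_inj, hP⟩ := Nat.exists_injective_prime_natCast_eq (Finset (Fin K))
    (q := 8) (u := 5) (by decide) (2 ^ (K + 1) + 5)
  refine ⟨P, hP_inj, fun I ↦ ?_⟩
  obtain ⟨hp, hp8, hpK⟩ := hP I
  have : Fact (P I).Prime := ⟨hp⟩
  have hp_mod : P I % 8 = 5 := by
    rw [← ZMod.val_natCast, hp8]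
    rfl
  refine ⟨hp, (Nat.le_add_left 5 _).trans_lt hpK,
    ZMod.exists_units_two_mul_prod_add_one_eq_zero_iff ?_ (by omega)⟩
  rw [ZMod.exists_sq_eq_neg_two_iff (by omega)]
  omega

theorem exists_modulus_gcd_two_mul_prod_add_one_eq_one_iff {K : ℕ}
    (T : Finset (Finset (Fin K))) (hT : ∀ I ∈ T, I.Nonempty) :
    ∃ M : ℕ, 2 ≤ M ∧ ∃ a : Fin K → ℤ, (∀ i, Int.gcd (a i) M = 1) ∧
      ∀ N : Fin K → ℤ, (∀ i, N i ≡ a i [ZMOD M]) →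
        (∀ I, Int.gcd (2 * ∏ i ∈ I, N i + 1) M = 1 ↔ I ∉ T) ∧
        (∀ i, ¬ N i - 1 ∣ 4 * ∏ j, N j) ∧ 1 < Int.gcd (4 * ∏ j, N j + 1) M := by
  obtain ⟨P, hP_inj, hP⟩ := exists_injective_primes_two_mul_prod_add_one_eq_zero_iff K
  choose b hb using fun I : T ↦ (hP I).2.2 (hT I I.2)
  let q : Option T → ℕ := fun j ↦ j.elim 5 fun I ↦ P I
  have hq_prime : ∀ j, (q j).Prime := by
    rintro (_ | I)
    · norm_num [q]
    · exact (hP I).1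
  have hq_inj : Function.Injective q := by
    rintro (_ | I) (_ | J) h <;> simp only [q, Option.elim] at h
    · rfl
    · exact absurd h (hP J).2.1.ne
    · exact absurd h (hP I).2.1.ne'
    · rw [Subtype.ext (hP_inj h)]
  choose a ha using fun i ↦ exists_intCast_eq_of_pairwise_coprime
    (fun j j' h ↦ (Nat.coprime_primes (hq_prime j) (hq_prime j')).2 (hq_inj.ne h))
    fun j ↦ j.rec (motive := fun j ↦ ZMod (q j)) 1 fun I ↦ (b I i : ZMod (P I))
  refine ⟨∏ j, q j, ?_, a, fun i ↦ ?_, fun N hN ↦ ?_⟩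
  · exact (hq_prime none).two_le.trans
      (single_le_prod' (fun j _ ↦ (hq_prime j).one_lt.le) (mem_univ none))
  · rw [Int.gcd_prod_primes_eq_one_iff hq_prime]
    rintro (_ | I) <;> rw [ha]
    · exact show (1 : ZMod 5) ≠ 0 by decide
    · have : Fact (P I).Prime := ⟨(hP I).1⟩
      exact (b I i).ne_zero
  have hNq : ∀ i j, (N i : ZMod (q j)) = (a i : ZMod (q j)) := fun i j ↦
    (ZMod.intCast_eq_intCast_iff _ _ _).2
      ((hN i).of_dvd (by exact_mod_cast dvd_prod_of_mem q (mem_univ j)))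
  have hN5 : ∀ i, (N i : ZMod 5) = 1 := fun i ↦ (hNq i none).trans (ha i none)
  have hNP : ∀ (I : T) i, (N i : ZMod (P I)) = b I i := fun I i ↦
    (hNq i (some I)).trans (ha i (some I))
  refine ⟨fun I ↦ ?_, not_sub_one_dvd_four_mul_prod hN5,
    (Int.one_lt_gcd_prod_primes_iff hq_prime _).2 ⟨none, intCast_four_mul_prod_add_one_eq_zero hN5⟩⟩
  rw [Int.gcd_prod_primes_eq_one_iff hq_prime, Option.forall]
  have h5 : ((2 * ∏ i ∈ I, N i + 1 : ℤ) : ZMod 5) ≠ 0 := by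
    push_cast [hN5, prod_const_one]
    decide
  have hP_iff : ∀ J : T, ((2 * ∏ i ∈ I, N i + 1 : ℤ) : ZMod (P J)) = 0 ↔ I = J := by
    intro J
    push_cast [hNP]
    exact hb J I
  exact ⟨fun ⟨_, h⟩ hI ↦ h ⟨I, hI⟩ ((hP_iff _).2 rfl),
    fun hI ↦ ⟨h5, fun J hJ ↦ hI (((hP_iff J).1 hJ) ▸ J.2)⟩⟩

theorem congruence_theorem_general (k : ℕ) (hk : 1 ≤ k)
    (x : Fin (2 * k) → ℤ) :
    ∃ M : ℕ, 2 ≤ M ∧ ∃ a : Fin (2 * k) → ℤ,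
      (∀ i, Int.gcd (a i) M = 1) ∧
      ∀ N : Fin (2 * k) → ℤ, (∀ i, 0 < N i) → (∀ i, N i ≡ a i [ZMOD (M : ℤ)]) →
        ((∀ I : Finset (Fin (2 * k)), I.Nonempty → I.card ≤ k →
            (Int.gcd (2 * (∏ i ∈ I, N i) + 1) M = 1 ↔
              (I.card = k ∧ ∑ i ∈ I, x i = (∑ i, x i) / 2))) ∧
          (∀ i, ¬ (N i - 1 ∣ 4 * ∏ j, N j)) ∧
          1 < Int.gcd (2 * (∏ i, N i) + 1) M ∧
          1 < Int.gcd (4 * (∏ i, N i) + 1) M) := by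
  set T := univ.filter fun I : Finset (Fin (2 * k)) ↦
    I.Nonempty ∧ ¬ (I.card = k ∧ ∑ i ∈ I, x i = (∑ i, x i) / 2)
  obtain ⟨M, hM, a, ha, hN⟩ :=
    exists_modulus_gcd_two_mul_prod_add_one_eq_one_iff T fun I hI ↦ (mem_filter.1 hI).2.1
  refine ⟨M, hM, a, ha, fun N _ hNa ↦ ?_⟩
  obtain ⟨hgcd, hdvd, hfour⟩ := hN N hNa
  have huniv : univ ∈ T := by
    have : Nonempty (Fin (2 * k)) := ⟨⟨0, by omega⟩⟩
    refine mem_filter.2 ⟨mem_univ _, univ_nonempty, fun h ↦ ?_⟩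
    rw [card_univ, Fintype.card_fin] at h
    omega
  refine ⟨fun I hI _ ↦ by simp [hgcd, T, hI], hdvd, ?_, hfour⟩
  have hpos := Int.gcd_pos_of_ne_zero_right (2 * ∏ i, N i + 1) (by omega : (M : ℤ) ≠ 0)
  have hne := (hgcd univ).not.2 (not_not.2 huniv)
  omega

/-- Theorem 3 of the paper: given an odd `k ≥ 1` and integers `x₁, …, x_{2k}` with even sum
`S`, there are a modulus `M ≥ 2` and residues `a₁, …, a_{2k}` coprime to `M` such that for
all positive integers `N₁, …, N_{2k}` with `Nᵢ ≡ aᵢ (mod M)`: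
(i) for every nonempty `I ⊆ {1,…,2k}` with `#I ≤ k`, `gcd(2·∏_{i∈I} Nᵢ + 1, M) = 1` iff
`#I = k` and `∑_{i∈I} xᵢ = S/2`;
(ii) for every `i`, `Nᵢ − 1 ∤ 4·N₁⋯N_{2k}`;
(iii) `gcd(2·N₁⋯N_{2k} + 1, M) > 1` and `gcd(4·N₁⋯N_{2k} + 1, M) > 1`. -/
theorem congruence_theorem (k : ℕ) (hk : 1 ≤ k) (hkodd : Odd k)
    (x : Fin (2 * k) → ℤ) (hS : Even (∑ i, x i)) :
    ∃ M : ℕ, 2 ≤ M ∧ ∃ a : Fin (2 * k) → ℤ,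
      (∀ i, Int.gcd (a i) M = 1) ∧
      ∀ N : Fin (2 * k) → ℤ, (∀ i, 0 < N i) → (∀ i, N i ≡ a i [ZMOD (M : ℤ)]) →
        ((∀ I : Finset (Fin (2 * k)), I.Nonempty → I.card ≤ k →
            (Int.gcd (2 * (∏ i ∈ I, N i) + 1) M = 1 ↔
              (I.card = k ∧ ∑ i ∈ I, x i = (∑ i, x i) / 2))) ∧
          (∀ i, ¬ (N i - 1 ∣ 4 * ∏ j, N j)) ∧
          1 < Int.gcd (2 * (∏ i, N i) + 1) M ∧
          1 < Int.gcd (4 * (∏ i, N i) + 1) M) :=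
  congruence_theorem_general k hk x
end

section
/- Let R ≥ 5 be a prime and let T = (2^R + 1)/3 (an integer since R is odd). Then for every nonnegative integer s, T divides 2^s + 1 if and only if s ≡ R (mod 2R). -/
/-- Let `R ≥ 5` be a prime and `T = (2^R + 1)/3`. Then for every nonnegative integer `s`,
`T ∣ 2^s + 1` if and only if `s ≡ R (mod 2R)`. -/
theorem dvd_two_pow_add_one_iff (R : ℕ) (hR : R.Prime) (hR5 : 5 ≤ R)
    (T : ℕ) (hT : 3 * T = 2 ^ R + 1) :
    ∀ s : ℕ, T ∣ 2 ^ s + 1 ↔ s ≡ R [MOD 2 * R] := by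
  have h32 : 32 ≤ 2 ^ R := by
    calc (32 : ℕ) = 2 ^ 5 := by norm_num
    _ ≤ 2 ^ R := Nat.pow_le_pow_right (by norm_num) hR5
  have hT11 : 11 ≤ T := by omega
  haveI : NeZero T := ⟨by omega⟩
  have hRpos : 0 < R := by omega
  -- key cast equivalence
  have key : ∀ s : ℕ, T ∣ 2 ^ s + 1 ↔ (2 : ZMod T) ^ s = -1 := by
    intro s
    constructor
    · intro h
      have h0 : ((2 ^ s + 1 : ℕ) : ZMod T) = 0 :=
        (ZMod.natCast_eq_zero_iff _ _).mpr h
      push_cast at h0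
      linear_combination h0
    · intro h
      have h0 : ((2 ^ s + 1 : ℕ) : ZMod T) = 0 := by
        push_cast
        linear_combination h
      exact (ZMod.natCast_eq_zero_iff _ _).mp h0
  have h2R : (2 : ZMod T) ^ R = -1 := (key R).mp ⟨3, by omega⟩
  have h2RR : (2 : ZMod T) ^ (2 * R) = 1 := by
    rw [two_mul, pow_add, h2R]; ring
  have hneg : (-1 : ZMod T) ≠ 1 := by
    intro h
    have h2 : ((2 : ℕ) : ZMod T) = 0 := by
      push_cast
      linear_combination -h
    have := Nat.le_of_dvd (by norm_num) ((ZMod.natCast_eq_zero_iff _ _).mp h2)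
    omega
  have h2ne1 : (2 : ZMod T) ^ R ≠ 1 := by rw [h2R]; exact hneg
  set d := orderOf (2 : ZMod T) with hd
  have hd2R : d ∣ 2 * R := orderOf_dvd_of_pow_eq_one h2RR
  have hdR : ¬ d ∣ R := fun h => h2ne1 (orderOf_dvd_iff_pow_eq_one.mp h)
  have hdne2 : ¬ d ∣ 2 := by
    intro h
    have h4 : (2 : ZMod T) ^ 2 = 1 := orderOf_dvd_iff_pow_eq_one.mp h
    have h3 : ((3 : ℕ) : ZMod T) = 0 := by push_cast; linear_combination h4
    have := Nat.le_of_dvd (by norm_num) ((ZMod.natCast_eq_zero_iff _ _).mp h3)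
    omega
  have hRd : R ∣ d := by
    by_contra hcon
    have hcop : Nat.Coprime d R := (hR.coprime_iff_not_dvd.mpr hcon).symm
    exact hdne2 (hcop.dvd_of_dvd_mul_right hd2R)
  have hdeq : d = 2 * R := by
    obtain ⟨k, hk⟩ := hRd
    have hk2 : k ∣ 2 := by
      have h1 : R * k ∣ R * 2 := by rw [← hk, mul_comm R 2]; exact hd2R
      exact (Nat.mul_dvd_mul_iff_left hRpos).mp h1
    have hkpos : 0 < k := Nat.pos_of_dvd_of_pos hk2 (by norm_num)
    have hkle : k ≤ 2 := Nat.le_of_dvd (by norm_num) hk2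
    interval_cases k
    · exact absurd (hk ▸ (by simp : R * 1 ∣ R)) hdR
    · omega
  intro s
  rw [key s]
  constructor
  · intro h
    have h2s : (2 : ZMod T) ^ (2 * s) = 1 := by
      rw [two_mul, pow_add, h]; ring
    have hdv : d ∣ 2 * s := orderOf_dvd_of_pow_eq_one h2s
    rw [hdeq] at hdv
    have hRs : R ∣ s := (Nat.mul_dvd_mul_iff_left (by norm_num : 0 < 2)).mp hdv
    obtain ⟨m, hm⟩ := hRs
    rw [hm, pow_mul, h2R] at h
    rcases Nat.even_or_odd m with he | ho
    · rw [he.neg_one_pow] at h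
      exact absurd h.symm hneg
    · obtain ⟨t, ht⟩ := ho
      have hs : s = 2 * R * t + R := by rw [hm, ht]; ring
      have hle : R ≤ s := by omega
      exact ((Nat.modEq_iff_dvd' hle).mpr ⟨t, by rw [hs, Nat.add_sub_cancel]⟩).symm
  · intro hs
    have hlt : R % (2 * R) = R := Nat.mod_eq_of_lt (by omega)
    have hmod : s % (2 * R) = R := by
      have := hs
      unfold Nat.ModEq at this
      rw [hlt] at this
      exact this
    have hq : s = 2 * R * (s / (2 * R)) + R := by
      have h0 := Nat.div_add_mod s (2 * R)
      rw [hmod] at h0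
      omega
    rw [hq, pow_add, pow_mul, h2RR, one_pow, one_mul, h2R]
end

section
/- Let k ≥ 1 and let p₁ < p₂ < ⋯ < p_{2k} be distinct primes each satisfying pᵢ ≡ 1 (mod 8), pᵢ ≡ 2 (mod 3), and pᵢ ≡ 4 (mod 5). If m is a positive integer with φ(m) = 4·p₁ p₂ ⋯ p_{2k}, then there exists a subset S ⊆ {1,…,2k} such that both P₁ = 2·∏_{i∈S} pᵢ + 1 and P₂ = 2·∏_{i∉S} pᵢ + 1 are prime and either m = P₁P₂ or m = 2P₁P₂. -/
open Nat Finset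

/-!
Write `m = 2 ^ a * n` with `n` odd and `D = ∏ pᵢ`. If `q² ∣ m` for an odd prime `q`, then
`q ∣ φ m = 4D`, so `q ∣ D`, `q ≡ 1 (mod 8)` and `8 ∣ q - 1 ∣ φ m`, impossible as `D` is odd.
Hence `n` is squarefree and `φ n = ∏ (q - 1)` is divisible by `2` once per prime factor, so `n`
has at most two. `n = 1` would make `D` a power of two, and a single prime `q` would have
`q - 1 ∈ {4D, 2D, D}`, forcing `5`, `3` or `2` to divide `q`. With two primes `q₁, q₂`, the
factor `4` in `(q₁ - 1)(q₂ - 1)` forces `φ (2 ^ a) = 1`, i.e. `a ≤ 1`, and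
`(q₁ - 1)/2 · (q₂ - 1)/2 = D`; unique factorisation splits the `pᵢ` between the two halves.
-/

theorem Finset.exists_subset_of_mul_eq_prod {ι : Type*} [DecidableEq ι] {p : ι → ℕ}
    (hp : ∀ i, (p i).Prime) {A : Finset ι} {d₁ d₂ : ℕ} (h : d₁ * d₂ = ∏ i ∈ A, p i) :
    ∃ S ⊆ A, d₁ = ∏ i ∈ S, p i ∧ d₂ = ∏ i ∈ A \ S, p i := by
  induction A using Finset.induction_on generalizing d₁ d₂ with
  | empty =>
    obtain ⟨rfl, rfl⟩ := mul_eq_one.mp h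
    exact ⟨∅, empty_subset _, by simp, by simp⟩
  | insert j A hj ih =>
    rw [prod_insert hj] at h
    rcases (hp j).dvd_mul.mp (h ▸ dvd_mul_right (p j) _) with ⟨e, rfl⟩ | ⟨e, rfl⟩
    · obtain ⟨S, hSA, rfl, rfl⟩ :=
        ih (d₁ := e) (Nat.eq_of_mul_eq_mul_left (hp j).pos (by rw [← h, mul_assoc]))
      refine ⟨insert j S, insert_subset_insert j hSA, ?_, ?_⟩
      · rw [prod_insert fun hjS => hj (hSA hjS)]
      · rw [insert_sdiff_insert, sdiff_insert_of_notMem hj]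
    · obtain ⟨S, hSA, rfl, rfl⟩ :=
        ih (d₂ := e) (Nat.eq_of_mul_eq_mul_left (hp j).pos (by rw [← h, mul_left_comm]))
      refine ⟨S, hSA.trans (subset_insert j A), rfl, ?_⟩
      rw [insert_sdiff_of_notMem A fun hjS => hj (hSA hjS),
        prod_insert fun hj' => hj (mem_sdiff.mp hj').1]

theorem Nat.ModEq.prod_fin_two_mul_eq_one {k n r : ℕ} {p : Fin (2 * k) → ℕ}
    (hp : ∀ i, p i ≡ r [MOD n]) (hr : r ^ 2 ≡ 1 [MOD n]) : ∏ i, p i ≡ 1 [MOD n] :=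
  calc ∏ i, p i ≡ ∏ _i : Fin (2 * k), r [MOD n] := Nat.ModEq.prod fun i _ => hp i
    _ = (r ^ 2) ^ k := by rw [prod_const, Finset.card_univ, Fintype.card_fin, pow_mul]
    _ ≡ 1 ^ k [MOD n] := hr.pow k
    _ = 1 := one_pow k

theorem Nat.totient_eq_prod_primeFactors_sub_one {n : ℕ} (hn : Squarefree n) :
    φ n = ∏ q ∈ n.primeFactors, (q - 1) := by
  have h := totient_mul_prod_primeFactors n
  rw [prod_primeFactors_of_squarefree hn] at h
  exact Nat.eq_of_mul_eq_mul_right (Nat.pos_of_ne_zero hn.ne_zero) (h.trans (mul_comm _ _))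

theorem Finset.two_pow_card_dvd_prod_sub_one {s : Finset ℕ} (hs : ∀ q ∈ s, Odd q) :
    2 ^ s.card ∣ ∏ q ∈ s, (q - 1) := by
  rw [← prod_const]
  exact prod_dvd_prod_of_dvd _ _ fun q hq => (Nat.Odd.sub_odd (hs q hq) odd_one).two_dvd

theorem Nat.totient_two_pow_dvd (a : ℕ) : φ (2 ^ a) ∣ 2 ^ a := by
  cases a with
  | zero => simp
  | succ a => simpa [totient_prime_pow_succ prime_two] using pow_dvd_pow 2 a.le_succ

theorem odd_of_forall_prime_dvd_mod_eight {D : ℕ} (hD : ∀ q, q.Prime → q ∣ D → q % 8 = 1) :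
    Odd D := by
  by_contra hD2
  have := hD 2 prime_two (not_odd_iff_even.mp hD2).two_dvd
  omega

theorem squarefree_of_dvd_of_totient_eq_four_mul {m D n : ℕ}
    (hD : ∀ q, q.Prime → q ∣ D → q % 8 = 1) (hφ : φ m = 4 * D) (hn : Odd n) (hnm : n ∣ m) :
    Squarefree n := by
  have hD2 := odd_of_forall_prime_dvd_mod_eight hD
  rw [squarefree_iff_prime_squarefree]
  intro q hq hqq
  have hq_odd : Odd q := hn.of_dvd_nat ((dvd_mul_right q q).trans hqq)
  have hdvd : q * (q - 1) ∣ 4 * D := by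
    have hφq : φ (q * q) = q * (q - 1) := by
      simpa [← sq] using totient_prime_pow_succ hq 1
    exact hφq ▸ hφ ▸ totient_dvd_of_dvd (hqq.trans hnm)
  have hq8 : q % 8 = 1 :=
    hD q hq ((Nat.Coprime.pow_right 2 hq_odd.coprime_two_right).dvd_of_dvd_mul_left
      (dvd_of_mul_right_dvd hdvd))
  have : 8 ∣ 4 * D := (show 8 ∣ q - 1 by omega).trans (dvd_of_mul_left_dvd hdvd)
  obtain ⟨D', rfl⟩ := hD2
  omega

theorem not_prime_of_mul_eq_four_mul {c d D : ℕ} (hc : c ∣ 4) (hD1 : 1 < D) (hD2 : Odd D)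
    (hD3 : D % 3 = 1) (hD5 : D % 5 = 1) (h : c * (2 * d) = 4 * D) : ¬ (2 * d + 1).Prime := by
  intro hq
  have h3 := hq.eq_one_or_self_of_dvd 3
  have h5 := hq.eq_one_or_self_of_dvd 5
  have : c ≤ 4 := le_of_dvd four_pos hc
  obtain ⟨D', rfl⟩ := hD2
  interval_cases c <;> omega

theorem exists_eq_mul_of_totient_eq_four_mul {m D : ℕ} (hD1 : 1 < D) (hD3 : D % 3 = 1)
    (hD5 : D % 5 = 1) (hD : ∀ q, q.Prime → q ∣ D → q % 8 = 1) (hφ : φ m = 4 * D) :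
    ∃ d₁ d₂, d₁ * d₂ = D ∧ (2 * d₁ + 1).Prime ∧ (2 * d₂ + 1).Prime ∧
      (m = (2 * d₁ + 1) * (2 * d₂ + 1) ∨ m = 2 * ((2 * d₁ + 1) * (2 * d₂ + 1))) := by
  have hD2 := odd_of_forall_prime_dvd_mod_eight hD
  have hm0 : m ≠ 0 := by rintro rfl; simp at hφ; omega
  obtain ⟨a, n, hn, rfl⟩ := exists_eq_two_pow_mul_odd hm0
  have hc : Coprime (φ (2 ^ a)) D :=
    (Coprime.pow_left a (coprime_two_left.mpr hD2)).coprime_dvd_left (totient_two_pow_dvd a)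
  have hsq := squarefree_of_dvd_of_totient_eq_four_mul hD hφ hn (dvd_mul_left n _)
  have hodd : ∀ q ∈ n.primeFactors, Odd q := fun q hq =>
    hn.of_dvd_nat (dvd_of_mem_primeFactors hq)
  rw [totient_mul (Coprime.pow_left a (coprime_two_left.mpr hn)),
    totient_eq_prod_primeFactors_sub_one hsq] at hφ
  have hcard : n.primeFactors.card ≤ 2 := by
    have h := (two_pow_card_dvd_prod_sub_one hodd).trans (Dvd.intro_left _ hφ)
    rw [← pow_dvd_pow_iff_le_right one_lt_two]
    exact (Coprime.pow_left _ (coprime_two_left.mpr hD2)).dvd_of_dvd_mul_right h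
  obtain h0 | h1 | h2 : n.primeFactors.card = 0 ∨ n.primeFactors.card = 1 ∨
      n.primeFactors.card = 2 := by omega
  · rw [card_eq_zero.mp h0, prod_empty, mul_one] at hφ
    have := hc.symm.eq_one_of_dvd (Dvd.intro_left 4 hφ.symm)
    omega
  · obtain ⟨q, hq⟩ := card_eq_one.mp h1
    have hqp : q.Prime := prime_of_mem_primeFactors (hq ▸ mem_singleton_self q)
    obtain ⟨d, rfl⟩ := hodd q (hq ▸ mem_singleton_self _)
    rw [hq, prod_singleton] at hφ
    exact absurd hqp (not_prime_of_mul_eq_four_mul (hc.dvd_of_dvd_mul_right (Dvd.intro _ hφ))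
      hD1 hD2 hD3 hD5 (by rwa [Nat.add_sub_cancel] at hφ))
  · obtain ⟨q₁, q₂, hne, hq⟩ := card_eq_two.mp h2
    have hq₁ : q₁ ∈ n.primeFactors := hq ▸ mem_insert_self _ _
    have hq₂ : q₂ ∈ n.primeFactors := hq ▸ mem_insert_of_mem (mem_singleton_self _)
    have hn_eq : n = q₁ * q₂ := by rw [← prod_primeFactors_of_squarefree hsq, hq, prod_pair hne]
    rw [hq, prod_pair hne] at hφ
    obtain ⟨d₁, rfl⟩ := hodd q₁ hq₁
    obtain ⟨d₂, rfl⟩ := hodd q₂ hq₂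
    have hd : φ (2 ^ a) * (d₁ * d₂) = D := by
      refine Nat.eq_of_mul_eq_mul_left four_pos ?_
      rw [← hφ, Nat.add_sub_cancel, Nat.add_sub_cancel]
      ring
    have hc1 : φ (2 ^ a) = 1 := hc.eq_one_of_dvd (Dvd.intro _ hd)
    rw [hc1, one_mul] at hd
    refine ⟨d₁, d₂, hd, prime_of_mem_primeFactors hq₁, prime_of_mem_primeFactors hq₂, ?_⟩
    rcases totient_eq_one_iff.mp hc1 with h | h <;> simp [h, hn_eq]

theorem totient_eq_four_mul_prod_structure_general (k : ℕ) (hk : 1 ≤ k)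
    (p : Fin (2 * k) → ℕ) (hp : ∀ i, (p i).Prime)
    (h8 : ∀ i, p i % 8 = 1) (h3 : ∀ i, p i % 3 = 2) (h5 : ∀ i, p i % 5 = 4)
    (m : ℕ) (hphi : m.totient = 4 * ∏ i, p i) :
    ∃ S : Finset (Fin (2 * k)),
      Nat.Prime (2 * (∏ i ∈ S, p i) + 1) ∧
      Nat.Prime (2 * (∏ i ∈ Sᶜ, p i) + 1) ∧
      (m = (2 * (∏ i ∈ S, p i) + 1) * (2 * (∏ i ∈ Sᶜ, p i) + 1) ∨
        m = 2 * ((2 * (∏ i ∈ S, p i) + 1) * (2 * (∏ i ∈ Sᶜ, p i) + 1))) := by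
  have hD1 : 1 < ∏ i, p i := (hp ⟨0, by omega⟩).one_lt.trans_le
    (single_le_prod' (fun i _ => (hp i).one_lt.le) (mem_univ _))
  have hD8 : ∀ q, q.Prime → q ∣ ∏ i, p i → q % 8 = 1 := by
    intro q hq hqD
    obtain ⟨i, -, hi⟩ := (Prime.dvd_finsetProd_iff hq.prime _).mp hqD
    rw [(prime_dvd_prime_iff_eq hq (hp i)).mp hi]
    exact h8 i
  obtain ⟨d₁, d₂, hd, hq₁, hq₂, hm⟩ := exists_eq_mul_of_totient_eq_four_mul hD1
    (ModEq.prod_fin_two_mul_eq_one (r := 2) h3 rfl)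
    (ModEq.prod_fin_two_mul_eq_one (r := 4) h5 rfl) hD8 hphi
  obtain ⟨S, -, rfl, rfl⟩ := exists_subset_of_mul_eq_prod hp hd
  rw [← compl_eq_univ_sdiff] at hq₂ hm
  exact ⟨S, hq₁, hq₂, hm⟩

/-- Let `k ≥ 1` and let `p₁ < ⋯ < p_{2k}` be primes with `pᵢ ≡ 1 (mod 8)`,
`pᵢ ≡ 2 (mod 3)` and `pᵢ ≡ 4 (mod 5)`. If `m` is a positive integer with
`φ(m) = 4·p₁⋯p_{2k}`, then there is a subset `S ⊆ {1,…,2k}` such that both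
`P₁ = 2·∏_{i∈S} pᵢ + 1` and `P₂ = 2·∏_{i∉S} pᵢ + 1` are prime and `m = P₁P₂`
or `m = 2P₁P₂`. -/
theorem totient_eq_four_mul_prod_structure (k : ℕ) (hk : 1 ≤ k)
    (p : Fin (2 * k) → ℕ) (hmono : StrictMono p) (hp : ∀ i, (p i).Prime)
    (h8 : ∀ i, p i % 8 = 1) (h3 : ∀ i, p i % 3 = 2) (h5 : ∀ i, p i % 5 = 4)
    (m : ℕ) (hm : 0 < m) (hphi : m.totient = 4 * ∏ i, p i) :
    ∃ S : Finset (Fin (2 * k)),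
      Nat.Prime (2 * (∏ i ∈ S, p i) + 1) ∧
      Nat.Prime (2 * (∏ i ∈ Sᶜ, p i) + 1) ∧
      (m = (2 * (∏ i ∈ S, p i) + 1) * (2 * (∏ i ∈ Sᶜ, p i) + 1) ∨
        m = 2 * ((2 * (∏ i ∈ S, p i) + 1) * (2 * (∏ i ∈ Sᶜ, p i) + 1))) :=
  totient_eq_four_mul_prod_structure_general k hk p hp h8 h3 h5 m hphi
end
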